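/- Let x₁, …, xₙ be a basis of ℝⁿ which is α-reduced for some 1/4 < α < 1, and let L be the lattice it generates, with determinant d(L) equal to the absolute value of the determinant of the matrix whose rows are x₁, …, xₙ. Then d(L) ≤ ∏_{j=1}^n ‖x_j‖ ≤ (4/(4α − 1))^{n(n−1)/4} · d(L). -/

import Mathlib

/-!
The Gram–Schmidt vectors `x*ⱼ` are orthogonal, and in the orthonormal basis they span, the
coordinate matrix of the `xⱼ` is triangular with diagonal `‖x*ⱼ‖`; hence `d(L) = ∏ ‖x*ⱼ‖`, and
Pythagoras gives `‖x*ⱼ‖ ≤ ‖xⱼ‖`. For the upper bound, the Lovász condition together with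
`|μ| ≤ 1/2` gives `‖x*ᵢ‖² ≤ β ‖x*ᵢ₊₁‖²` for `β = 4/(4α-1)`, so
`‖xⱼ‖² ≤ (1 + ¼ ∑_{k<j} β^(j-k)) ‖x*ⱼ‖² ≤ β^j ‖x*ⱼ‖²` (indices from `0`), the last step
because `β ≥ 4/3`. Multiplying over `j` gives the factor `β^(n(n-1)/4)`.
-/
open Finset InnerProductSpace RealInnerProductSpace

section GramSchmidt

variable {ι E : Type*} [LinearOrder ι] [LocallyFiniteOrderBot ι] [WellFoundedLT ι]
  [NormedAddCommGroup E] [InnerProductSpace ℝ E]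

noncomputable def gramSchmidtCoeff (f : ι → E) (j k : ι) : ℝ :=
  ⟪gramSchmidt ℝ f k, f j⟫ / ‖gramSchmidt ℝ f k‖ ^ 2

theorem eq_gramSchmidt_add_sum_gramSchmidtCoeff (f : ι → E) (j : ι) :
    f j = gramSchmidt ℝ f j + ∑ k ∈ Iio j, gramSchmidtCoeff f j k • gramSchmidt ℝ f k := by
  simpa [gramSchmidtCoeff] using gramSchmidt_def'' ℝ f j

theorem eq_gramSchmidt_of_eq_sub_sum {f g : ι → E}
    (hg : ∀ j, g j = f j - ∑ k ∈ Iio j, (⟪f j, g k⟫ / ‖g k‖ ^ 2) • g k) :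
    g = gramSchmidt ℝ f := by
  funext j
  induction j using WellFoundedLT.induction with
  | _ j ih =>
    calc g j = f j - ∑ k ∈ Iio j, gramSchmidtCoeff f j k • gramSchmidt ℝ f k := by
          rw [hg j]
          congr 1
          refine sum_congr rfl fun k hk => ?_
          rw [ih k (mem_Iio.1 hk), gramSchmidtCoeff, real_inner_comm]
      _ = gramSchmidt ℝ f j := by
          rw [sub_eq_iff_eq_add, ← eq_gramSchmidt_add_sum_gramSchmidtCoeff]

theorem norm_sum_sq_eq_sum_norm_sq {κ : Type*} {v : κ → E}
    (hv : Pairwise fun i j => ⟪v i, v j⟫ = 0) (s : Finset κ) :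
    ‖∑ i ∈ s, v i‖ ^ 2 = ∑ i ∈ s, ‖v i‖ ^ 2 := by
  classical
  induction s using Finset.induction_on with
  | empty => simp
  | insert i s hi ih =>
    have hperp : ⟪v i, ∑ k ∈ s, v k⟫ = 0 := by
      rw [inner_sum]
      exact sum_eq_zero fun k hk => hv (ne_of_mem_of_not_mem hk hi).symm
    rw [sum_insert hi, sum_insert hi, norm_add_sq_real, hperp, mul_zero, add_zero, ih]

theorem inner_gramSchmidt_sum_eq_zero (f : ι → E) (c : ι → ℝ) (j : ι) :
    ⟪gramSchmidt ℝ f j, ∑ k ∈ Iio j, c k • gramSchmidt ℝ f k⟫ = 0 := by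
  rw [inner_sum]
  exact sum_eq_zero fun k hk => by
    rw [real_inner_smul_right, gramSchmidt_orthogonal ℝ f (mem_Iio.1 hk).ne', mul_zero]

theorem norm_sq_eq_norm_sq_gramSchmidt_add_sum (f : ι → E) (j : ι) :
    ‖f j‖ ^ 2 = ‖gramSchmidt ℝ f j‖ ^ 2 +
      ∑ k ∈ Iio j, gramSchmidtCoeff f j k ^ 2 * ‖gramSchmidt ℝ f k‖ ^ 2 := by
  have horth : Pairwise fun k l =>
      ⟪gramSchmidtCoeff f j k • gramSchmidt ℝ f k,
        gramSchmidtCoeff f j l • gramSchmidt ℝ f l⟫ = 0 :=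
    fun k l hkl => by
      dsimp only
      rw [real_inner_smul_left, real_inner_smul_right, gramSchmidt_orthogonal ℝ f hkl, mul_zero,
        mul_zero]
  conv_lhs => rw [eq_gramSchmidt_add_sum_gramSchmidtCoeff f j]
  rw [norm_add_sq_real, inner_gramSchmidt_sum_eq_zero, mul_zero, add_zero,
    norm_sum_sq_eq_sum_norm_sq horth]
  simp only [norm_smul, mul_pow, Real.norm_eq_abs, sq_abs]

theorem norm_gramSchmidt_le (f : ι → E) (j : ι) : ‖gramSchmidt ℝ f j‖ ≤ ‖f j‖ := by
  refine (pow_le_pow_iff_left₀ (norm_nonneg _) (norm_nonneg _) two_ne_zero).1 ?_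
  rw [norm_sq_eq_norm_sq_gramSchmidt_add_sum f j]
  exact le_add_of_nonneg_right (sum_nonneg fun k _ => by positivity)

theorem inner_gramSchmidt_self (f : ι → E) (j : ι) :
    ⟪gramSchmidt ℝ f j, f j⟫ = ‖gramSchmidt ℝ f j‖ ^ 2 := by
  conv_lhs => rw [eq_gramSchmidt_add_sum_gramSchmidtCoeff f j]
  rw [inner_add_right, inner_gramSchmidt_sum_eq_zero, add_zero, real_inner_self_eq_norm_sq]

variable [Fintype ι] [FiniteDimensional ℝ E]

theorem inner_gramSchmidtOrthonormalBasis_self (h : Module.finrank ℝ E = Fintype.card ι)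
    (f : ι → E) (i : ι) : ⟪gramSchmidtOrthonormalBasis h f i, f i⟫ = ‖gramSchmidt ℝ f i‖ := by
  by_cases hi : gramSchmidt ℝ f i = 0
  · rw [inner_gramSchmidtOrthonormalBasis_eq_zero h (by simp [gramSchmidtNormed, hi]), hi,
      norm_zero]
  · rw [gramSchmidtOrthonormalBasis_apply h (by simp [gramSchmidtNormed, hi]), gramSchmidtNormed,
      real_inner_smul_left, inner_gramSchmidt_self]
    simp only [RCLike.ofReal_real_eq_id, id]
    field_simp

theorem abs_det_eq_prod_norm_gramSchmidt [DecidableEq ι] (b : OrthonormalBasis ι ℝ E)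
    (f : ι → E) : |b.toBasis.det f| = ∏ i, ‖gramSchmidt ℝ f i‖ := by
  have h : Module.finrank ℝ E = Fintype.card ι := Module.finrank_eq_card_basis b.toBasis
  set e := gramSchmidtOrthonormalBasis h f
  rw [AlternatingMap.eq_smul_basis_det e.toBasis b.toBasis.det, AlternatingMap.smul_apply,
    smul_eq_mul, abs_mul, OrthonormalBasis.coe_toBasis, ← Real.norm_eq_abs (b.toBasis.det e),
    b.det_to_matrix_orthonormalBasis, one_mul, gramSchmidtOrthonormalBasis_det]
  simp only [inner_gramSchmidtOrthonormalBasis_self]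
  exact abs_of_nonneg (prod_nonneg fun i _ => norm_nonneg _)

end GramSchmidt

theorem le_pow_mul_of_le_mul_succ {n : ℕ} {a : Fin n → ℝ} {c : ℝ} (hc : 0 ≤ c)
    (h : ∀ i j : Fin n, (i : ℕ) + 1 = j → a i ≤ c * a j) {i j : Fin n} (hij : i ≤ j) :
    a i ≤ c ^ ((j : ℕ) - i) * a j := by
  obtain ⟨d, hd⟩ := Nat.exists_eq_add_of_le (Fin.le_def.1 hij)
  induction d generalizing j with
  | zero => simp [Fin.ext (hd.trans (add_zero _))]
  | succ d ih =>
    let k : Fin n := ⟨i + d, by omega⟩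
    calc a i ≤ c ^ ((k : ℕ) - i) * a k := ih (Fin.le_def.2 (by simp [k])) rfl
      _ ≤ c ^ ((k : ℕ) - i) * (c * a j) :=
          mul_le_mul_of_nonneg_left (h k j (by simp [k]; omega)) (by positivity)
      _ = c ^ ((j : ℕ) - i) * a j := by
          rw [← mul_assoc, ← pow_succ, hd]
          congr 2
          simp [k]

theorem one_add_sum_pow_div_four_le {β : ℝ} (hβ : 4 / 3 ≤ β) (J : ℕ) :
    1 + (∑ m ∈ range J, β ^ (J - m)) / 4 ≤ β ^ J := by
  induction J with
  | zero => simp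
  | succ J ih =>
    have hsum : ∑ m ∈ range (J + 1), β ^ (J + 1 - m) =
        ∑ m ∈ range J, β ^ (J - m) + β ^ (J + 1) := by
      simp [sum_range_succ', Nat.add_sub_add_right]
    have hpow : 4 / 3 * β ^ J ≤ β * β ^ J := mul_le_mul_of_nonneg_right hβ (by positivity)
    rw [hsum, pow_succ']
    linarith

theorem sum_range_natCast (n : ℕ) : ∑ i ∈ range n, (i : ℝ) = n * (n - 1) / 2 := by
  induction n with
  | zero => simp
  | succ n ih =>
    rw [sum_range_succ, ih]
    push_cast
    ring

section LLL

variable {n : ℕ} {E : Type*} [NormedAddCommGroup E] [InnerProductSpace ℝ E]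

structure IsLLLReduced (α : ℝ) (b : Fin n → E) : Prop where
  abs_gramSchmidtCoeff_le : ∀ j k, k < j → |gramSchmidtCoeff b j k| ≤ 1 / 2
  lovasz : ∀ i j : Fin n, (i : ℕ) + 1 = j →
    α * ‖gramSchmidt ℝ b i‖ ^ 2 ≤
      ‖gramSchmidt ℝ b j + gramSchmidtCoeff b j i • gramSchmidt ℝ b i‖ ^ 2

variable {α : ℝ} {b : Fin n → E}

namespace IsLLLReduced

theorem sq_gramSchmidtCoeff_le (hb : IsLLLReduced α b) {j k : Fin n} (hkj : k < j) :
    gramSchmidtCoeff b j k ^ 2 ≤ 1 / 4 := by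
  have := pow_le_pow_left₀ (abs_nonneg _) (hb.abs_gramSchmidtCoeff_le j k hkj) 2
  rwa [sq_abs, div_pow, one_pow, show (2 : ℝ) ^ 2 = 4 by norm_num] at this

theorem norm_sq_gramSchmidt_le_mul_succ (hb : IsLLLReduced α b) (hα : 1 / 4 < α)
    {i j : Fin n} (hij : (i : ℕ) + 1 = j) :
    ‖gramSchmidt ℝ b i‖ ^ 2 ≤ 4 / (4 * α - 1) * ‖gramSchmidt ℝ b j‖ ^ 2 := by
  have hlt : i < j := Fin.lt_def.2 (by omega)
  have hpyth : ‖gramSchmidt ℝ b j + gramSchmidtCoeff b j i • gramSchmidt ℝ b i‖ ^ 2 =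
      ‖gramSchmidt ℝ b j‖ ^ 2 + gramSchmidtCoeff b j i ^ 2 * ‖gramSchmidt ℝ b i‖ ^ 2 := by
    rw [norm_add_sq_real, real_inner_smul_right, gramSchmidt_orthogonal ℝ b hlt.ne', norm_smul,
      Real.norm_eq_abs, mul_pow, sq_abs]
    ring
  have hlovasz := hb.lovasz i j hij
  have hcoeff := mul_le_mul_of_nonneg_right (hb.sq_gramSchmidtCoeff_le hlt)
    (sq_nonneg ‖gramSchmidt ℝ b i‖)
  rw [div_mul_eq_mul_div, le_div_iff₀ (by linarith)]
  linarith

theorem norm_sq_gramSchmidt_le_pow_mul (hb : IsLLLReduced α b) (hα : 1 / 4 < α)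
    {k j : Fin n} (hkj : k ≤ j) :
    ‖gramSchmidt ℝ b k‖ ^ 2 ≤ (4 / (4 * α - 1)) ^ ((j : ℕ) - k) * ‖gramSchmidt ℝ b j‖ ^ 2 :=
  le_pow_mul_of_le_mul_succ (div_pos four_pos (by linarith)).le
    (fun _ _ => hb.norm_sq_gramSchmidt_le_mul_succ hα) hkj

theorem norm_sq_le_pow_mul_norm_sq_gramSchmidt (hb : IsLLLReduced α b) (hα : 1 / 4 < α)
    (hα1 : α ≤ 1) (j : Fin n) :
    ‖b j‖ ^ 2 ≤ (4 / (4 * α - 1)) ^ (j : ℕ) * ‖gramSchmidt ℝ b j‖ ^ 2 := by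
  set β := 4 / (4 * α - 1)
  have hβ : 4 / 3 ≤ β := by
    rw [le_div_iff₀ (by linarith)]
    linarith
  have hreindex : ∑ k ∈ Iio j, β ^ ((j : ℕ) - k) = ∑ m ∈ range j, β ^ ((j : ℕ) - m) := by
    rw [← Nat.Iio_eq_range, ← Fin.map_valEmbedding_Iio, sum_map]
    rfl
  calc ‖b j‖ ^ 2
      = ‖gramSchmidt ℝ b j‖ ^ 2 +
          ∑ k ∈ Iio j, gramSchmidtCoeff b j k ^ 2 * ‖gramSchmidt ℝ b k‖ ^ 2 :=
        norm_sq_eq_norm_sq_gramSchmidt_add_sum b j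
    _ ≤ ‖gramSchmidt ℝ b j‖ ^ 2 +
          ∑ k ∈ Iio j, 1 / 4 * (β ^ ((j : ℕ) - k) * ‖gramSchmidt ℝ b j‖ ^ 2) := by
        gcongr with k hk
        · exact hb.sq_gramSchmidtCoeff_le (mem_Iio.1 hk)
        · exact hb.norm_sq_gramSchmidt_le_pow_mul hα (mem_Iio.1 hk).le
    _ = (1 + (∑ m ∈ range j, β ^ ((j : ℕ) - m)) / 4) * ‖gramSchmidt ℝ b j‖ ^ 2 := by
        rw [← hreindex, ← mul_sum, ← sum_mul]
        ring
    _ ≤ β ^ (j : ℕ) * ‖gramSchmidt ℝ b j‖ ^ 2 := by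
        gcongr
        exact one_add_sum_pow_div_four_le hβ j

theorem norm_le_rpow_mul_norm_gramSchmidt (hb : IsLLLReduced α b) (hα : 1 / 4 < α)
    (hα1 : α ≤ 1) (j : Fin n) :
    ‖b j‖ ≤ (4 / (4 * α - 1)) ^ ((j : ℝ) / 2) * ‖gramSchmidt ℝ b j‖ := by
  have hβ : 0 < 4 / (4 * α - 1) := div_pos four_pos (by linarith)
  refine (pow_le_pow_iff_left₀ (norm_nonneg _) (by positivity) two_ne_zero).1 ?_
  rw [mul_pow, ← Real.rpow_natCast ((4 / (4 * α - 1)) ^ ((j : ℝ) / 2)) 2,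
    ← Real.rpow_mul hβ.le, Nat.cast_ofNat, div_mul_cancel₀ _ two_ne_zero, Real.rpow_natCast]
  exact hb.norm_sq_le_pow_mul_norm_sq_gramSchmidt hα hα1 j

theorem prod_norm_le (hb : IsLLLReduced α b) (hα : 1 / 4 < α) (hα1 : α ≤ 1) :
    ∏ j, ‖b j‖ ≤ (4 / (4 * α - 1)) ^ (((n : ℝ) * ((n : ℝ) - 1)) / 4) *
      ∏ j, ‖gramSchmidt ℝ b j‖ := by
  have hβ : 0 < 4 / (4 * α - 1) := div_pos four_pos (by linarith)
  have hexponent : ∑ j : Fin n, (j : ℝ) / 2 = (n : ℝ) * ((n : ℝ) - 1) / 4 := by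
    rw [← sum_div, Fin.sum_univ_eq_sum_range (fun j => (j : ℝ)), sum_range_natCast]
    ring
  calc ∏ j, ‖b j‖ ≤ ∏ j : Fin n, (4 / (4 * α - 1)) ^ ((j : ℝ) / 2) * ‖gramSchmidt ℝ b j‖ :=
        prod_le_prod (fun _ _ => norm_nonneg _)
          fun j _ => hb.norm_le_rpow_mul_norm_gramSchmidt hα hα1 j
    _ = _ := by rw [prod_mul_distrib, ← Real.rpow_sum_of_pos hβ, hexponent]

end IsLLLReduced

end LLL

theorem statement6_general (n : ℕ) (α : ℝ) (hα : 1 / 4 < α) (hα1 : α < 1)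
    (x : Fin n → EuclideanSpace ℝ (Fin n))
    (xstar : Fin n → EuclideanSpace ℝ (Fin n))
    (μ : Fin n → Fin n → ℝ)
    (hμ : ∀ j k : Fin n, μ j k = (inner ℝ (x j) (xstar k) : ℝ) / ‖xstar k‖ ^ 2)
    (hgs : ∀ j : Fin n,
      xstar j = x j - ∑ k ∈ Finset.univ.filter (· < j), μ j k • xstar k)
    (hred1 : ∀ j k : Fin n, k < j → |μ j k| ≤ 1 / 2)
    (hred2 : ∀ i j : Fin n, (i : ℕ) + 1 = (j : ℕ) →
      α * ‖xstar i‖ ^ 2 ≤ ‖xstar j + μ j i • xstar i‖ ^ 2) :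
    |(Matrix.of fun j i => x j i).det| ≤ ∏ j, ‖x j‖ ∧
    ∏ j, ‖x j‖ ≤ (4 / (4 * α - 1)) ^ (((n : ℝ) * ((n : ℝ) - 1)) / 4) *
      |(Matrix.of fun j i => x j i).det| := by
  obtain rfl : xstar = gramSchmidt ℝ x :=
    eq_gramSchmidt_of_eq_sub_sum fun j => by simpa [filter_gt_eq_Iio, hμ] using hgs j
  obtain rfl : μ = gramSchmidtCoeff x := by
    ext j k
    rw [hμ, gramSchmidtCoeff, real_inner_comm]
  have hdet : (Matrix.of fun j i => x j i).det =
      (EuclideanSpace.basisFun (Fin n) ℝ).toBasis.det x := by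
    rw [Module.Basis.det_apply, ← Matrix.det_transpose]
    rfl
  rw [hdet, abs_det_eq_prod_norm_gramSchmidt]
  exact ⟨prod_le_prod (fun _ _ => norm_nonneg _) fun j _ => norm_gramSchmidt_le x j,
    IsLLLReduced.prod_norm_le ⟨hred1, hred2⟩ hα hα1.le⟩

/-- Property (ii) of LLL-reduced bases: if `x₁, …, xₙ` is an α-reduced basis of
ℝⁿ generating a lattice `L` with determinant `d(L) = |det X|` (rows `x j`), then
`d(L) ≤ ∏ ‖x j‖ ≤ (4/(4α-1))^(n(n-1)/4) d(L)`. -/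
theorem statement6 (n : ℕ) (α : ℝ) (hα : 1 / 4 < α) (hα1 : α < 1)
    (x : Fin n → EuclideanSpace ℝ (Fin n))
    (hx_indep : LinearIndependent ℝ x)
    (hx_span : Submodule.span ℝ (Set.range x) = ⊤)
    (xstar : Fin n → EuclideanSpace ℝ (Fin n))
    (μ : Fin n → Fin n → ℝ)
    (hμ : ∀ j k : Fin n, μ j k = (inner ℝ (x j) (xstar k) : ℝ) / ‖xstar k‖ ^ 2)
    (hgs : ∀ j : Fin n,
      xstar j = x j - ∑ k ∈ Finset.univ.filter (· < j), μ j k • xstar k)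
    (hred1 : ∀ j k : Fin n, k < j → |μ j k| ≤ 1 / 2)
    (hred2 : ∀ i j : Fin n, (i : ℕ) + 1 = (j : ℕ) →
      α * ‖xstar i‖ ^ 2 ≤ ‖xstar j + μ j i • xstar i‖ ^ 2) :
    |(Matrix.of fun j i => x j i).det| ≤ ∏ j, ‖x j‖ ∧
    ∏ j, ‖x j‖ ≤ (4 / (4 * α - 1)) ^ (((n : ℝ) * ((n : ℝ) - 1)) / 4) *
      |(Matrix.of fun j i => x j i).det| :=
  statement6_general n α hα hα1 x xstar μ hμ hgs hred1 hred2
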